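/- arXiv:2203.07082 — 2 statements merged into one kernel-verified Lean document; each statement's English description precedes it below -/
import Mathlib

section
/- The dihedral angle of a regular tetrahedron is arccos(1/3), and this angle does not divide 2π; equivalently, 2π / arccos(1/3) is not an integer. -/
/-!
Since `cos (2π/5) = (√5 - 1)/4 < 1/3 < 1/2 = cos (π/3)` and `arccos` is decreasing,
`π/3 < arccos (1/3) < 2π/5`, so `2π / arccos (1/3)` lies strictly between `5` and `6`.
-/

open Real

lemma cos_two_pi_div_five : cos (2 * π / 5) = (√5 - 1) / 4 := by
  have h5 : √5 ^ 2 = 5 := sq_sqrt (by norm_num)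
  rw [show 2 * π / 5 = 2 * (π / 5) by ring, cos_two_mul, cos_pi_div_five]
  linear_combination h5 / 8

lemma pi_div_three_lt_arccos_one_third : π / 3 < arccos (1 / 3) :=
  calc π / 3 = arccos (1 / 2) := by
        rw [← cos_pi_div_three, arccos_cos (by positivity) (by linarith [pi_pos])]
    _ < arccos (1 / 3) := arccos_lt_arccos (by norm_num) (by norm_num) (by norm_num)

lemma arccos_one_third_lt_two_pi_div_five : arccos (1 / 3) < 2 * π / 5 := by
  have hsqrt : √5 < 7 / 3 := by
    rw [sqrt_lt' (by norm_num)]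
    norm_num
  calc arccos (1 / 3) < arccos ((√5 - 1) / 4) :=
        arccos_lt_arccos (by linarith [sqrt_nonneg 5]) (by linarith) (by norm_num)
    _ = 2 * π / 5 := by
        rw [← cos_two_pi_div_five, arccos_cos (by positivity) (by linarith [pi_pos])]

/-- The dihedral angle of a regular tetrahedron, `arccos(1/3)`, does not divide `2π`:
`2π / arccos(1/3)` is not an integer. -/
theorem stmt_7 : ¬ ∃ k : ℤ, 2 * Real.pi / Real.arccos (1 / 3) = (k : ℝ) := by
  rintro ⟨k, hk⟩
  have hlower := pi_div_three_lt_arccos_one_third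
  have hupper := arccos_one_third_lt_two_pi_div_five
  have hθ : 0 < arccos (1 / 3) := by linarith [pi_pos]
  have h5 : (5 : ℝ) < k := by
    rw [← hk, lt_div_iff₀ hθ]
    linarith
  have h6 : (k : ℝ) < 6 := by
    rw [← hk, div_lt_iff₀ hθ]
    linarith
  have h5' : (5 : ℤ) < k := by exact_mod_cast h5
  have h6' : k < 6 := by exact_mod_cast h6
  omega
end

section
/- Let R = ℝ[x₁, …, x_n] with S_n acting by permuting variables, and let s be a simple transposition. Then R is free as a module over the invariant subring Rˢ of rank 2, with basis {1, x_i} (where s = (i, i+1)); consequently the bimodule B_s = R ⊗_{Rˢ} R is free of rank 2 as a left R-module. -/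
open MvPolynomial

/-!
Modulo `X i - X j` the swap `s = (i j)` acts trivially, so `f - s f = b * (X i - X j)`; applying
`s` to this identity shows that the divided difference `b` is `s`-invariant, and then
`f = (f - b * X i) + b * X i` with both coefficients invariant. For uniqueness, applying `s` to
`a + b * X i = a' + b' * X i` and subtracting gives `(b - b') * (X i - X j) = 0`.
-/

namespace MvPolynomial

variable {R σ : Type*} [CommRing R]

theorem X_sub_X_ne_zero [Nontrivial R] {i j : σ} (hij : i ≠ j) :
    (X i - X j : MvPolynomial σ R) ≠ 0 :=
  sub_ne_zero.mpr (X_injective.ne hij)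

variable [DecidableEq σ]

theorem X_sub_X_dvd_sub_rename_swap (i j : σ) (f : MvPolynomial σ R) :
    X i - X j ∣ f - rename (Equiv.swap i j) f := by
  set I := Ideal.span {(X i - X j : MvPolynomial σ R)}
  have hX (k : σ) :
      Ideal.Quotient.mkₐ R I (X (Equiv.swap i j k)) = Ideal.Quotient.mkₐ R I (X k) := by
    have hij : Ideal.Quotient.mk I (X i) = Ideal.Quotient.mk I (X j) :=
      Ideal.Quotient.eq.mpr (Ideal.mem_span_singleton_self _)
    rcases eq_or_ne k i with rfl | hki
    · simpa using hij.symm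
    rcases eq_or_ne k j with rfl | hkj
    · simpa using hij
    · rw [Equiv.swap_apply_of_ne_of_ne hki hkj]
  have hmk : (Ideal.Quotient.mkₐ R I).comp (rename (Equiv.swap i j)) = Ideal.Quotient.mkₐ R I :=
    algHom_ext fun k => by simpa using hX k
  rw [← Ideal.mem_span_singleton, ← Ideal.Quotient.eq]
  exact (congrArg (· f) hmk).symm

@[simp]
theorem rename_swap_rename_swap (i j : σ) (f : MvPolynomial σ R) :
    rename (Equiv.swap i j) (rename (Equiv.swap i j) f) = f := by
  rw [rename_rename, ← Equiv.coe_trans, Equiv.swap_swap, Equiv.coe_refl, rename_id,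
    AlgHom.id_apply]

variable [IsDomain R] {i j : σ}

theorem rename_swap_eq_of_sub_rename_swap_eq_mul (hij : i ≠ j) {f b : MvPolynomial σ R}
    (h : f - rename (Equiv.swap i j) f = b * (X i - X j)) :
    rename (Equiv.swap i j) b = b := by
  have hs : rename (Equiv.swap i j) f - f = rename (Equiv.swap i j) b * (X j - X i) := by
    simpa only [map_sub, map_mul, rename_swap_rename_swap, rename_X, Equiv.swap_apply_left,
      Equiv.swap_apply_right] using congrArg (rename (Equiv.swap i j)) h
  refine mul_right_cancel₀ (X_sub_X_ne_zero hij) ?_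
  linear_combination hs + h

theorem exists_add_mul_X_of_ne (hij : i ≠ j) (f : MvPolynomial σ R) :
    ∃ a b : MvPolynomial σ R, rename (Equiv.swap i j) a = a ∧ rename (Equiv.swap i j) b = b ∧
      f = a + b * X i := by
  obtain ⟨b, hb⟩ := X_sub_X_dvd_sub_rename_swap i j f
  have hbs := rename_swap_eq_of_sub_rename_swap_eq_mul hij (hb.trans (mul_comm _ _))
  refine ⟨f - b * X i, b, ?_, hbs, by ring⟩
  rw [map_sub, map_mul, hbs, rename_X, Equiv.swap_apply_left]
  linear_combination -hb

theorem eq_and_eq_of_add_mul_X_eq (hij : i ≠ j) {a b a' b' : MvPolynomial σ R}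
    (ha : rename (Equiv.swap i j) a = a) (hb : rename (Equiv.swap i j) b = b)
    (ha' : rename (Equiv.swap i j) a' = a') (hb' : rename (Equiv.swap i j) b' = b')
    (h : a + b * X i = a' + b' * X i) : a = a' ∧ b = b' := by
  have hs : a + b * X j = a' + b' * X j := by
    simpa only [map_add, map_mul, ha, hb, ha', hb', rename_X, Equiv.swap_apply_left] using
      congrArg (rename (Equiv.swap i j)) h
  have hbb : b = b' := mul_right_cancel₀ (X_sub_X_ne_zero hij) (by linear_combination h - hs)
  exact ⟨by linear_combination h - X i * hbb, hbb⟩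

theorem existsUnique_add_mul_X_of_ne (hij : i ≠ j) (f : MvPolynomial σ R) :
    ∃! p : {g : MvPolynomial σ R // rename (Equiv.swap i j) g = g} ×
        {g : MvPolynomial σ R // rename (Equiv.swap i j) g = g},
      f = (p.1 : MvPolynomial σ R) + (p.2 : MvPolynomial σ R) * X i := by
  obtain ⟨a, b, ha, hb, hf⟩ := exists_add_mul_X_of_ne hij f
  refine ⟨(⟨a, ha⟩, ⟨b, hb⟩), hf, ?_⟩
  rintro ⟨⟨a', ha'⟩, ⟨b', hb'⟩⟩ hf'
  obtain ⟨rfl, rfl⟩ := eq_and_eq_of_add_mul_X_eq hij ha' hb' ha hb (hf'.symm.trans hf)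
  rfl

end MvPolynomial

/-- Let `R = ℝ[x₁,…,x_n]` with `S_n` permuting the variables, and let `s = (i, i+1)` be a simple
transposition.  Then `R` is free of rank `2` over the invariant subring `Rˢ` with basis
`{1, x_i}`: every `f ∈ R` is uniquely `f = a + b·x_i` with `a, b` invariant under `s`
(i.e. `R = Rˢ·1 ⊕ Rˢ·x_i`).  Consequently the Soergel bimodule `B_s = R ⊗_{Rˢ} R` is free of
rank `2` as a left `R`-module. -/
theorem stmt_18 (n : ℕ) (i : Fin n) (hi : (i : ℕ) + 1 < n) (f : MvPolynomial (Fin n) ℝ) :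
    ∃! p : {g : MvPolynomial (Fin n) ℝ //
              MvPolynomial.rename (Equiv.swap i ⟨(i : ℕ) + 1, hi⟩) g = g} ×
           {g : MvPolynomial (Fin n) ℝ //
              MvPolynomial.rename (Equiv.swap i ⟨(i : ℕ) + 1, hi⟩) g = g},
      f = (p.1 : MvPolynomial (Fin n) ℝ) + (p.2 : MvPolynomial (Fin n) ℝ) * X i := by
  have hij : i ≠ ⟨(i : ℕ) + 1, hi⟩ := fun h => by simpa using congrArg Fin.val h
  exact existsUnique_add_mul_X_of_ne hij f
end
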